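/- Let u : ℝⁿ → ℝ be a smooth solution of Δu = u³ − u on ℝⁿ with |u(x)| < 1 for every x. Then the gradient of u is uniformly bounded: there exists a constant C > 0 such that |∇u(x)| ≤ C for all x ∈ ℝⁿ. -/

import Mathlib

open MeasureTheory Filter
open scoped ENNReal

noncomputable section

/-- Second partial derivative `∂²u/∂xᵢ∂xⱼ` at `x`. -/
def pderiv2 {n : ℕ} (u : EuclideanSpace ℝ (Fin n) → ℝ) (x : EuclideanSpace ℝ (Fin n))
    (i j : Fin n) : ℝ :=
  fderiv ℝ (fun y => fderiv ℝ u y (EuclideanSpace.single j 1)) x (EuclideanSpace.single i 1)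

/-- The Laplacian `Δu(x)`. -/
def lap {n : ℕ} (u : EuclideanSpace ℝ (Fin n) → ℝ) (x : EuclideanSpace ℝ (Fin n)) : ℝ :=
  ∑ i, pderiv2 u x i i

/-- Frobenius (Hilbert–Schmidt) norm `‖D²u(x)‖` of the Hessian of `u` at `x`. -/
def hessNorm {n : ℕ} (u : EuclideanSpace ℝ (Fin n) → ℝ) (x : EuclideanSpace ℝ (Fin n)) : ℝ :=
  Real.sqrt (∑ i, ∑ j, (pderiv2 u x i j) ^ 2)

/-- The quantity `Q(u;x) = (‖D²u‖² − |∇|∇u||²)/|∇u|²`. -/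
def Qfun {n : ℕ} (u : EuclideanSpace ℝ (Fin n) → ℝ) (x : EuclideanSpace ℝ (Fin n)) : ℝ :=
  ((hessNorm u x) ^ 2 - ‖gradient (fun y => ‖gradient u y‖) x‖ ^ 2) / ‖gradient u x‖ ^ 2

/-- `F` is an admissible set with C¹ defining function `v`: `F = {v < 0}` and `∇v ≠ 0`
on `{v = 0}`, so `∂F = {v = 0}` is a C¹ hypersurface. -/
def IsAdmissiblePair {n : ℕ} (F : Set (EuclideanSpace ℝ (Fin n)))
    (v : EuclideanSpace ℝ (Fin n) → ℝ) : Prop :=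
  ContDiff ℝ 1 v ∧ F = {x | v x < 0} ∧ ∀ x, v x = 0 → gradient v x ≠ 0

/-- An admissible set. -/
def IsAdmissible {n : ℕ} (F : Set (EuclideanSpace ℝ (Fin n))) : Prop :=
  ∃ v, IsAdmissiblePair F v

/-- Weighted perimeter `𝒫_g(F,B) = ∫_{∂F ∩ B} g dH^{n−1}`. -/
def wper {n : ℕ} (g : EuclideanSpace ℝ (Fin n) → ℝ) (F B : Set (EuclideanSpace ℝ (Fin n))) :
    ℝ≥0∞ :=
  ∫⁻ x in frontier F ∩ B, ENNReal.ofReal (g x) ∂(μH[(n : ℝ) - 1])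

/-- Anisotropic perimeter `𝒫_G(F,B) = ∫_{∂F ∩ B} G(x, ν_F(x)) dH^{n−1}`, where the unit
normal `ν_F = ∇v/|∇v|` is computed from the defining function `v` of `F`. -/
def aper {n : ℕ} (G : EuclideanSpace ℝ (Fin n) → EuclideanSpace ℝ (Fin n) → ℝ)
    (v : EuclideanSpace ℝ (Fin n) → ℝ)
    (F B : Set (EuclideanSpace ℝ (Fin n))) : ℝ≥0∞ :=
  ∫⁻ x in frontier F ∩ B, ENNReal.ofReal (G x (‖gradient v x‖⁻¹ • gradient v x))
    ∂(μH[(n : ℝ) - 1])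

/-- `A` is compactly contained in `B`. -/
def CompactlyContained {n : ℕ} (A B : Set (EuclideanSpace ℝ (Fin n))) : Prop :=
  IsCompact (closure A) ∧ closure A ⊆ B

/-- The point `(x', t) ∈ ℝⁿ⁺¹` obtained from `x' ∈ ℝⁿ` by appending last coordinate `t`. -/
def appendCoord {n : ℕ} (x' : EuclideanSpace ℝ (Fin n)) (t : ℝ) :
    EuclideanSpace ℝ (Fin (n + 1)) :=
  WithLp.toLp 2 (fun i => (Fin.snoc (fun j => x' j) t : Fin (n + 1) → ℝ) i)

/-- The point `x' ∈ ℝⁿ` of first `n` coordinates of `x ∈ ℝⁿ⁺¹`. -/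
def restrictCoord {n : ℕ} (x : EuclideanSpace ℝ (Fin (n + 1))) : EuclideanSpace ℝ (Fin n) :=
  WithLp.toLp 2 (fun i => x i.castSucc)

/-- `S` is a C² graph: there are a unit vector `e` and `ψ : e^⊥ → ℝ` of class C² with
`S = {y + ψ(y)e : y ∈ e^⊥}`. -/
def IsGraph {n : ℕ} (S : Set (EuclideanSpace ℝ (Fin n))) : Prop :=
  ∃ e : EuclideanSpace ℝ (Fin n), ‖e‖ = 1 ∧
    ∃ ψ : (Submodule.span ℝ {e})ᗮ → ℝ, ContDiff ℝ 2 ψ ∧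
      S = {x | ∃ y : (Submodule.span ℝ {e})ᗮ,
        x = (y : EuclideanSpace ℝ (Fin n)) + ψ y • e}

/-- Conditions (a)–(d) on the elliptic integrand `G`, with C³-closeness constant `Λ`:
(a) positive 1-homogeneity in `p`; (b) `G(x,p) ≥ μ₀|p|` for some `μ₀ > 0`;
(c) ellipticity of `D²_p G`; (d) derivatives up to order 3 of `G − |p|` on `|p| = 1`
bounded by `Λ`; together with continuity and C² regularity away from `p = 0`. -/
def EllipticIntegrand {n : ℕ}
    (G : EuclideanSpace ℝ (Fin n) → EuclideanSpace ℝ (Fin n) → ℝ) (Λ : ℝ) : Prop :=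
  Continuous (fun q : EuclideanSpace ℝ (Fin n) × EuclideanSpace ℝ (Fin n) => G q.1 q.2) ∧
  ContDiffOn ℝ 2 (fun q : EuclideanSpace ℝ (Fin n) × EuclideanSpace ℝ (Fin n) => G q.1 q.2)
    {q | q.2 ≠ 0} ∧
  (∀ a : ℝ, 0 < a → ∀ x p, G x (a • p) = a * G x p) ∧
  (∃ μ₀ > (0 : ℝ), ∀ x p, μ₀ * ‖p‖ ≤ G x p) ∧
  (∀ x p, p ≠ 0 → ∀ ξ : EuclideanSpace ℝ (Fin n),
    ‖p‖⁻¹ * ‖ξ - ((inner ℝ ξ (‖p‖⁻¹ • p) : ℝ)) • (‖p‖⁻¹ • p)‖ ^ 2 ≤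
      fderiv ℝ (fun q => fderiv ℝ (G x) q ξ) p ξ) ∧
  (∀ x p, ‖p‖ = 1 → ∀ k : ℕ, k ≤ 3 →
    ‖iteratedFDeriv ℝ k
      (fun q : EuclideanSpace ℝ (Fin n) × EuclideanSpace ℝ (Fin n) => G q.1 q.2 - ‖q.2‖)
      (x, p)‖ < Λ)

open EuclideanSpace
noncomputable section AllenCahnAux
variable {n : ℕ}
local notation "E" => EuclideanSpace ℝ (Fin n)

def acEE (n : ℕ) (i : Fin n) : EuclideanSpace ℝ (Fin n) := EuclideanSpace.single i 1

def acPd (f : EuclideanSpace ℝ (Fin n) → ℝ) (x : EuclideanSpace ℝ (Fin n)) (i : Fin n) : ℝ :=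
  fderiv ℝ f x (acEE n i)

lemma acDiffAt {f : E → ℝ} (hf : ContDiff ℝ (⊤ : ℕ∞) f) (x : E) : DifferentiableAt ℝ f x :=
  (hf.differentiable (by simp)).differentiableAt

lemma acSmooth_pd {f : E → ℝ} (hf : ContDiff ℝ (⊤ : ℕ∞) f) (i : Fin n) :
    ContDiff ℝ (⊤ : ℕ∞) (fun y => acPd f y i) :=
  (hf.fderiv_right (by simp)).clm_apply contDiff_const

lemma acPd_add {f g : E → ℝ} (hf : ContDiff ℝ (⊤ : ℕ∞) f) (hg : ContDiff ℝ (⊤ : ℕ∞) g) (x : E) (i : Fin n) :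
    acPd (fun y => f y + g y) x i = acPd f x i + acPd g x i := by
  unfold acPd; rw [fderiv_fun_add (acDiffAt hf x) (acDiffAt hg x)]; rfl

lemma acPd_sub {f g : E → ℝ} (hf : ContDiff ℝ (⊤ : ℕ∞) f) (hg : ContDiff ℝ (⊤ : ℕ∞) g) (x : E) (i : Fin n) :
    acPd (fun y => f y - g y) x i = acPd f x i - acPd g x i := by
  unfold acPd; rw [fderiv_fun_sub (acDiffAt hf x) (acDiffAt hg x)]; rfl

lemma acPd_mul {f g : E → ℝ} (hf : ContDiff ℝ (⊤ : ℕ∞) f) (hg : ContDiff ℝ (⊤ : ℕ∞) g) (x : E) (i : Fin n) :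
    acPd (fun y => f y * g y) x i = f x * acPd g x i + g x * acPd f x i := by
  unfold acPd; rw [fderiv_fun_mul (acDiffAt hf x) (acDiffAt hg x)]; rfl

lemma acPd_const (c : ℝ) (x : E) (i : Fin n) : acPd (fun _ => c) x i = 0 := by
  unfold acPd; rw [fderiv_fun_const]; rfl

lemma acPd_const_mul {f : E → ℝ} (hf : ContDiff ℝ (⊤ : ℕ∞) f) (c : ℝ) (x : E) (i : Fin n) :
    acPd (fun y => c * f y) x i = c * acPd f x i := by
  unfold acPd; rw [fderiv_const_mul (acDiffAt hf x)]; rfl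

lemma acPd_sum {ι : Type*} (s : Finset ι) (f : ι → E → ℝ) (hf : ∀ j, ContDiff ℝ (⊤ : ℕ∞) (f j))
    (x : E) (i : Fin n) :
    acPd (fun y => ∑ j ∈ s, f j y) x i = ∑ j ∈ s, acPd (f j) x i := by
  unfold acPd; rw [fderiv_fun_sum (fun j _ => acDiffAt (hf j) x)]; simp

lemma acFderiv_eval {F : E → (E →L[ℝ] ℝ)} {x : E} (hF : DifferentiableAt ℝ F x) (c ξ : E) :
    fderiv ℝ (fun y => F y c) x ξ = fderiv ℝ F x ξ c := by
  rw [fderiv_clm_apply hF (differentiableAt_const c)]; simp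

lemma acPd_symm {f : E → ℝ} (hf : ContDiff ℝ (⊤ : ℕ∞) f) (x : E) (i j : Fin n) :
    acPd (fun y => acPd f y j) x i = acPd (fun y => acPd f y i) x j := by
  have hd : ∀ y, HasFDerivAt f (fderiv ℝ f y) y := fun y => (acDiffAt hf y).hasFDerivAt
  have hD : DifferentiableAt ℝ (fderiv ℝ f) x :=
    ((hf.fderiv_right (m := (⊤ : ℕ∞)) (by simp)).differentiable (by simp)) x
  have hsymm := second_derivative_symmetric hd hD.hasFDerivAt (acEE n i) (acEE n j)
  unfold acPd
  rw [acFderiv_eval hD, acFderiv_eval hD, hsymm]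

lemma acSecond_deriv_test {g g' : ℝ → ℝ} {c : ℝ}
    (hg : ∀ t, HasDerivAt g (g' t) t) (hc : HasDerivAt g' c 0)
    (hmax : IsLocalMax g 0) : c ≤ 0 := by
  by_contra hpos
  push_neg at hpos
  have h0 : g' 0 = 0 := by
    have := hmax.deriv_eq_zero
    rwa [(hg 0).deriv] at this
  have hslope := hasDerivAt_iff_tendsto_slope.1 hc
  have hev : ∀ᶠ t in nhdsWithin 0 {(0:ℝ)}ᶜ, 0 < slope g' 0 t :=
    hslope.eventually (eventually_gt_nhds hpos)
  rw [eventually_nhdsWithin_iff] at hev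
  obtain ⟨δ, hδpos, hδ⟩ := Metric.eventually_nhds_iff.1 hev
  have hgpos : ∀ t ∈ Set.Ioo (0:ℝ) δ, 0 < g' t := by
    intro t ht
    have h1 : 0 < slope g' 0 t := by
      apply hδ (by simp [abs_of_pos ht.1, ht.2]) (by simp [ne_of_gt ht.1])
    have : slope g' 0 t = g' t / t := by
      simp [slope, h0, div_eq_inv_mul]
    rw [this] at h1
    exact (div_pos_iff.1 h1).resolve_right (fun h => absurd ht.1 (not_lt.2 h.2.le)) |>.1
  have hmono : StrictMonoOn g (Set.Ico (0:ℝ) δ) := by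
    apply strictMonoOn_of_deriv_pos (convex_Ico _ _)
      (Continuous.continuousOn (by
        exact continuous_iff_continuousAt.2 fun t => (hg t).continuousAt))
    intro t ht
    rw [interior_Ico] at ht
    rw [(hg t).deriv]
    exact hgpos t ht
  obtain ⟨ε, hεpos, hε⟩ := Metric.eventually_nhds_iff.1 hmax
  set t := min δ ε / 2 with htdef
  have ht0 : 0 < t := by positivity
  have htδ : t < δ := by
    have : t ≤ δ / 2 := by have := min_le_left δ ε; linarith
    linarith
  have htε : |t| < ε := by
    rw [abs_of_pos ht0]
    have : t ≤ ε / 2 := by have := min_le_right δ ε; linarith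
    linarith
  have h1 : g 0 < g t := hmono ⟨le_refl 0, hδpos⟩ ⟨ht0.le, htδ⟩ ht0
  have h2 : g t ≤ g 0 := by
    have := hε (by simpa using htε)
    simpa using this
  linarith

lemma acLocalmax_pd2_nonpos {f : E → ℝ} (hf : ContDiff ℝ (⊤ : ℕ∞) f) {p : E}
    (hmax : IsLocalMax f p) (i : Fin n) :
    acPd (fun y => acPd f y i) p i ≤ 0 := by
  set v := acEE n i with hv
  set L : ℝ → E := fun t => p + t • v with hL
  have hLd : ∀ t : ℝ, HasDerivAt L v t := by
    intro t
    show HasDerivAt (fun t => p + t • v) v t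
    simpa using ((hasDerivAt_id t).smul_const v).const_add p
  have hg : ∀ t, HasDerivAt (fun t => f (L t)) (acPd f (L t) i) t := by
    intro t
    exact ((acDiffAt hf (L t)).hasFDerivAt).comp_hasDerivAt t (hLd t)
  have hg' : HasDerivAt (fun t => acPd f (L t) i) (acPd (fun y => acPd f y i) p i) 0 := by
    have h := ((acDiffAt (acSmooth_pd hf i) (L 0)).hasFDerivAt).comp_hasDerivAt 0 (hLd 0)
    have hL0 : L 0 = p := by simp [hL]
    rw [hL0] at h
    exact h
  have hLmax : IsLocalMax (fun t => f (L t)) 0 := by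
    have hcont : Filter.Tendsto L (nhds 0) (nhds p) := by
      have hc : Continuous L := by continuity
      have h := hc.tendsto 0
      simpa [hL] using h
    have h2 := hcont.eventually hmax
    unfold IsLocalMax IsMaxFilter
    simpa [hL] using h2
  exact acSecond_deriv_test hg hg' hLmax

def acLap (f : EuclideanSpace ℝ (Fin n) → ℝ) (x : EuclideanSpace ℝ (Fin n)) : ℝ :=
  ∑ i, acPd (fun y => acPd f y i) x i

lemma acLap_add {f g : E → ℝ} (hf : ContDiff ℝ (⊤ : ℕ∞) f) (hg : ContDiff ℝ (⊤ : ℕ∞) g) (x : E) :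
    acLap (fun y => f y + g y) x = acLap f x + acLap g x := by
  unfold acLap
  rw [← Finset.sum_add_distrib]
  refine Finset.sum_congr rfl fun i _ => ?_
  have e1 : (fun y => acPd (fun z => f z + g z) y i)
      = fun y => acPd f y i + acPd g y i := funext fun y => acPd_add hf hg y i
  rw [e1, acPd_add (acSmooth_pd hf i) (acSmooth_pd hg i)]

lemma acLap_const_mul {f : E → ℝ} (hf : ContDiff ℝ (⊤ : ℕ∞) f) (c : ℝ) (x : E) :
    acLap (fun y => c * f y) x = c * acLap f x := by
  unfold acLap
  rw [Finset.mul_sum]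
  refine Finset.sum_congr rfl fun i _ => ?_
  have e1 : (fun y => acPd (fun z => c * f z) y i)
      = fun y => c * acPd f y i := funext fun y => acPd_const_mul hf c y i
  rw [e1, acPd_const_mul (acSmooth_pd hf i)]

lemma acLap_mul {f g : E → ℝ} (hf : ContDiff ℝ (⊤ : ℕ∞) f) (hg : ContDiff ℝ (⊤ : ℕ∞) g) (x : E) :
    acLap (fun y => f y * g y) x
      = f x * acLap g x + g x * acLap f x + 2 * ∑ i, acPd f x i * acPd g x i := by
  unfold acLap
  have h : ∀ i : Fin n, acPd (fun y => acPd (fun z => f z * g z) y i) x i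
      = (f x * acPd (fun y => acPd g y i) x i + acPd g x i * acPd f x i)
        + (g x * acPd (fun y => acPd f y i) x i + acPd f x i * acPd g x i) := by
    intro i
    have e1 : (fun y => acPd (fun z => f z * g z) y i)
        = fun y => f y * acPd g y i + g y * acPd f y i := funext fun y => acPd_mul hf hg y i
    rw [e1, acPd_add (hf.mul (acSmooth_pd hg i)) (hg.mul (acSmooth_pd hf i)),
      acPd_mul hf (acSmooth_pd hg i), acPd_mul hg (acSmooth_pd hf i)]
  rw [Finset.sum_congr rfl fun i _ => h i]
  simp only [Finset.sum_add_distrib, ← Finset.mul_sum]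
  have e2 : ∑ i : Fin n, acPd g x i * acPd f x i = ∑ i : Fin n, acPd f x i * acPd g x i :=
    Finset.sum_congr rfl fun i _ => mul_comm _ _
  rw [e2]; ring

end AllenCahnAux

noncomputable section AllenCahnAux2
open EuclideanSpace
variable {n : ℕ}
local notation "E" => EuclideanSpace ℝ (Fin n)

lemma acSmooth_coord (k : Fin n) : ContDiff ℝ (⊤ : ℕ∞) (fun y : E => y k) :=
  (EuclideanSpace.proj (𝕜 := ℝ) k).contDiff

lemma acPd_coord (k : Fin n) (x : E) (i : Fin n) :
    acPd (fun y : E => y k) x i = if k = i then 1 else 0 := by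
  unfold acPd
  have e : (fun y : E => y k) = EuclideanSpace.proj (𝕜 := ℝ) k := rfl
  rw [e, ContinuousLinearMap.fderiv]
  show (acEE n i) k = _
  unfold acEE
  rw [EuclideanSpace.single_apply]

section eta
variable (a : EuclideanSpace ℝ (Fin n))

def acS (a : E) : E → ℝ := fun y => ∑ k, (y k - a k) * (y k - a k)
def acQ (a : E) : E → ℝ := fun y => 1 - acS a y
def acEta (a : E) : E → ℝ := fun y => acQ a y * acQ a y

lemma acSmooth_c (k : Fin n) : ContDiff ℝ (⊤ : ℕ∞) (fun y : E => y k - a k) :=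
  (acSmooth_coord k).sub contDiff_const

lemma acSmooth_S : ContDiff ℝ (⊤ : ℕ∞) (acS a) := by
  unfold acS
  exact ContDiff.sum fun k _ => (acSmooth_c a k).mul (acSmooth_c a k)

lemma acSmooth_Q : ContDiff ℝ (⊤ : ℕ∞) (acQ a) := contDiff_const.sub (acSmooth_S a)

lemma acSmooth_Eta : ContDiff ℝ (⊤ : ℕ∞) (acEta a) := (acSmooth_Q a).mul (acSmooth_Q a)

lemma acPd_c (k : Fin n) (x : E) (i : Fin n) :
    acPd (fun y : E => y k - a k) x i = if k = i then 1 else 0 := by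
  rw [acPd_sub (acSmooth_coord k) contDiff_const, acPd_const, acPd_coord, sub_zero]

lemma acPd_S (x : E) (i : Fin n) : acPd (acS a) x i = 2 * (x i - a i) := by
  unfold acS
  rw [acPd_sum Finset.univ (fun k => fun y : E => (y k - a k) * (y k - a k))
    (fun k => (acSmooth_c a k).mul (acSmooth_c a k))]
  have h : ∀ k : Fin n, acPd (fun y : E => (y k - a k) * (y k - a k)) x i
      = if k = i then 2 * (x i - a i) else 0 := by
    intro k
    rw [acPd_mul (acSmooth_c a k) (acSmooth_c a k), acPd_c]
    by_cases h : k = i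
    · subst h; simp; ring
    · simp [h]
  rw [Finset.sum_congr rfl fun k _ => h k]
  simp

lemma acPd_Q (x : E) (i : Fin n) : acPd (acQ a) x i = -(2 * (x i - a i)) := by
  unfold acQ
  rw [acPd_sub contDiff_const (acSmooth_S a), acPd_const, acPd_S, zero_sub]

lemma acPd_Eta (x : E) (i : Fin n) :
    acPd (acEta a) x i = -4 * (acQ a x * (x i - a i)) := by
  unfold acEta
  rw [acPd_mul (acSmooth_Q a) (acSmooth_Q a), acPd_Q]
  ring

lemma acLap_Eta (x : E) : acLap (acEta a) x = 8 * acS a x - 4 * n * acQ a x := by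
  unfold acLap
  have h : ∀ i : Fin n, acPd (fun y => acPd (acEta a) y i) x i
      = 8 * ((x i - a i) * (x i - a i)) - 4 * acQ a x := by
    intro i
    have e1 : (fun y => acPd (acEta a) y i)
        = fun y => -4 * (acQ a y * (fun z : E => z i - a i) y) :=
      funext fun y => acPd_Eta a y i
    rw [e1, acPd_const_mul ((acSmooth_Q a).mul (acSmooth_c a i)),
      acPd_mul (acSmooth_Q a) (acSmooth_c a i), acPd_c, acPd_Q]
    simp
    ring
  rw [Finset.sum_congr rfl fun i _ => h i]
  rw [Finset.sum_sub_distrib]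
  simp only [← Finset.mul_sum]
  have : ∑ i : Fin n, (x i - a i) * (x i - a i) = acS a x := rfl
  rw [this]
  simp [Finset.card_univ]
  ring

end eta
end AllenCahnAux2

noncomputable section AllenCahnMain
open EuclideanSpace
variable {n : ℕ}
local notation "E" => EuclideanSpace ℝ (Fin n)

lemma acS_dist (a x : EuclideanSpace ℝ (Fin n)) : acS a x = dist x a ^ 2 := by
  rw [EuclideanSpace.dist_eq, Real.sq_sqrt (Finset.sum_nonneg fun i _ => sq_nonneg _)]
  unfold acS
  refine Finset.sum_congr rfl fun i _ => ?_
  rw [Real.dist_eq, sq_abs]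
  ring

set_option maxHeartbeats 1000000 in
lemma acKey (u : EuclideanSpace ℝ (Fin n) → ℝ) (hu : ContDiff ℝ (⊤ : ℕ∞) u)
    (heq : ∀ x, acLap u x = (u x) ^ 3 - u x) (hbd : ∀ x, |u x| < 1)
    (a : EuclideanSpace ℝ (Fin n)) (j : Fin n) :
    (acPd u a j) * (acPd u a j) ≤ 2 + (4 * (n : ℝ) + 26) := by
  set M : ℝ := 4 * (n : ℝ) + 26 with hM
  have hn : (0:ℝ) ≤ n := Nat.cast_nonneg n
  have hMpos : 0 < M := by rw [hM]; linarith
  set φ : EuclideanSpace ℝ (Fin n) → ℝ := fun y => acPd u y j with hφdef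
  have hφ : ContDiff ℝ (⊤ : ℕ∞) φ := acSmooth_pd hu j
  -- commutation: Δφ = (3u² − 1)φ
  have hlapφ : ∀ x, acLap φ x = (3 * (u x * u x) - 1) * φ x := by
    intro x
    have step1 : ∀ i : Fin n, acPd (fun y => acPd φ y i) x i
        = acPd (fun y => acPd (fun z => acPd u z i) y i) x j := by
      intro i
      have e1 : (fun y => acPd φ y i) = fun y => acPd (fun z => acPd u z i) y j := by
        funext y
        exact acPd_symm hu y i j
      rw [e1]
      exact acPd_symm (acSmooth_pd hu i) x i j
    have step2 : acLap φ x = acPd (fun y => acLap u y) x j := by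
      unfold acLap
      rw [Finset.sum_congr rfl fun i _ => step1 i]
      rw [← acPd_sum Finset.univ (fun i => fun y => acPd (fun z => acPd u z i) y i)
        (fun i => acSmooth_pd (acSmooth_pd hu i) i) x j]
    rw [step2]
    have e2 : (fun y => acLap u y) = fun y => u y * (u y * u y) - u y := by
      funext y
      rw [heq y]
      ring
    rw [e2, acPd_sub (hu.mul (hu.mul hu)) hu, acPd_mul hu (hu.mul hu), acPd_mul hu hu]
    show _ = (3 * (u x * u x) - 1) * acPd u x j
    ring
  -- the auxiliary function w
  set w : EuclideanSpace ℝ (Fin n) → ℝ :=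
    fun y => acEta a y * (φ y * φ y) + M * (u y * u y) with hwdef
  have hw : ContDiff ℝ (⊤ : ℕ∞) w := ((acSmooth_Eta a).mul (hφ.mul hφ)).add
    (contDiff_const.mul (hu.mul hu))
  obtain ⟨p, hpK, hpmax⟩ := (isCompact_closedBall a 1).exists_isMaxOn
    ⟨a, Metric.mem_closedBall_self zero_le_one⟩ (hw.continuous.continuousOn)
  have hs0nn : 0 ≤ acS a p := by rw [acS_dist]; positivity
  have hs0le : acS a p ≤ 1 := by
    rw [acS_dist]
    have hdd := Metric.mem_closedBall.1 hpK
    nlinarith only [hdd, dist_nonneg (x := p) (y := a)]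
  have hUbd : u p * u p < 1 := by
    have habs := abs_lt.1 (hbd p)
    nlinarith only [habs.1, habs.2]
  -- bound w p ≤ 2 + M
  have hwp : w p ≤ 2 + M := by
    rcases lt_or_ge (dist p a) 1 with hint | hbdy
    · -- interior case: Bernstein computation
      have hploc : IsLocalMax w p := by
        apply hpmax.isLocalMax
        exact Filter.mem_of_superset (Metric.isOpen_ball.mem_nhds (Metric.mem_ball.2 hint))
          Metric.ball_subset_closedBall
      have hLap0 : acLap w p ≤ 0 :=
        Finset.sum_nonpos fun i _ => acLocalmax_pd2_nonpos hw hploc i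
      -- abbreviations
      set s0 := acS a p with hs0def
      set q0 := acQ a p with hq0def
      set P := φ p with hPdef
      set U := u p with hUdef
      set A := ∑ i, acPd φ p i * acPd φ p i with hAdef
      set B := ∑ i, acPd u p i * acPd u p i with hBdef
      set T := ∑ i, (p i - a i) * acPd φ p i with hTdef
      have hq0 : q0 = 1 - s0 := rfl
      have hq0nn : 0 ≤ q0 := by rw [hq0]; linarith only [hs0le]
      have hq0le : q0 ≤ 1 := by rw [hq0]; linarith only [hs0nn]
      have hAnn : 0 ≤ A := Finset.sum_nonneg fun i _ => mul_self_nonneg _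
      have hBP : P * P ≤ B := by
        have := Finset.single_le_sum (f := fun i => acPd u p i * acPd u p i)
          (fun i _ => mul_self_nonneg _) (Finset.mem_univ j)
        exact this
      have hCS : T * T ≤ s0 * A := by
        have h := Finset.sum_mul_sq_le_sq_mul_sq Finset.univ
          (fun i => p i - a i) (fun i => acPd φ p i)
        have e1 : ∑ i : Fin n, (p i - a i) ^ 2 = s0 := by
          rw [hs0def]; unfold acS
          exact Finset.sum_congr rfl fun i _ => by ring
        have e2 : ∑ i : Fin n, (acPd φ p i) ^ 2 = A := by
          rw [hAdef]
          exact Finset.sum_congr rfl fun i _ => by ring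
        calc T * T = (∑ i : Fin n, (p i - a i) * acPd φ p i) ^ 2 := by rw [hTdef]; ring
          _ ≤ (∑ i : Fin n, (p i - a i) ^ 2) * ∑ i : Fin n, (acPd φ p i) ^ 2 := h
          _ = s0 * A := by rw [e1, e2]
      -- expand the Laplacian of w
      have e1 : acLap w p = acLap (fun y => acEta a y * (φ y * φ y)) p
          + acLap (fun y => M * (u y * u y)) p :=
        acLap_add ((acSmooth_Eta a).mul (hφ.mul hφ)) (contDiff_const.mul (hu.mul hu)) p
      have e2 : acLap (fun y => acEta a y * (φ y * φ y)) p
          = acEta a p * acLap (fun y => φ y * φ y) p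
            + (φ p * φ p) * acLap (acEta a) p
            + 2 * ∑ i, acPd (acEta a) p i * acPd (fun y => φ y * φ y) p i :=
        acLap_mul (acSmooth_Eta a) (hφ.mul hφ) p
      have e3 : acLap (fun y => φ y * φ y) p
          = φ p * acLap φ p + φ p * acLap φ p + 2 * A := acLap_mul hφ hφ p
      have e4 : acLap (fun y => M * (u y * u y)) p = M * acLap (fun y => u y * u y) p :=
        acLap_const_mul (hu.mul hu) M p
      have e5 : acLap (fun y => u y * u y) p
          = u p * acLap u p + u p * acLap u p + 2 * B := acLap_mul hu hu p
      have e6 : ∑ i, acPd (acEta a) p i * acPd (fun y => φ y * φ y) p i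
          = (-8 * (q0 * P)) * T := by
        rw [hTdef, Finset.mul_sum]
        refine Finset.sum_congr rfl fun i _ => ?_
        rw [acPd_Eta, acPd_mul hφ hφ]
        show -4 * (q0 * (p i - a i)) * (P * acPd φ p i + P * acPd φ p i) = _
        ring
      have hEta : acEta a p = q0 * q0 := rfl
      have hbig : acLap w p
          = q0 * q0 * (P * ((3 * (U * U) - 1) * P) + P * ((3 * (U * U) - 1) * P) + 2 * A)
            + (P * P) * (8 * s0 - 4 * (n : ℝ) * q0)
            + 2 * ((-8 * (q0 * P)) * T)
            + M * (U * (U * U * U - U) + U * (U * U * U - U) + 2 * B) := by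
        rw [e1, e2, e3, e4, e5, e6, acLap_Eta, hEta, hlapφ p, heq p]
        show q0 * q0 * (P * ((3 * (U*U) - 1) * P) + P * ((3 * (U*U) - 1) * P) + 2 * A)
            + (P * P) * (8 * s0 - 4 * (n:ℝ) * q0)
            + 2 * ((-8 * (q0 * P)) * T)
            + M * (U * (U^3 - U) + U * (U^3 - U) + 2 * B) = _
        ring
      -- bound w p expression
      have hwpe : w p = (q0*q0) * (P*P) + M * (U*U) := by
        rw [hwdef]; show acEta a p * _ + _ = _; rw [hEta]
      clear_value s0 q0 P U A B T
      have hq0sq : q0 * q0 ≤ 1 := by nlinarith only [hq0nn, hq0le]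
      -- the cross-term estimate
      have hcross : -(2 * (q0*q0) * A) - 32 * s0 * (P*P) ≤ 2 * ((-8 * (q0 * P)) * T) := by
        rcases eq_or_lt_of_le hs0nn with h0 | hpos
        · have hsA : s0 * A = 0 := by rw [← h0]; ring
          have hT2 : T * T ≤ 0 := by linarith only [hCS, hsA]
          have hT : T = 0 := mul_self_eq_zero.mp (le_antisymm hT2 (mul_self_nonneg T))
          rw [hT]
          nlinarith only [mul_nonneg (mul_nonneg hq0nn hq0nn) hAnn,
            mul_nonneg (le_of_eq h0) (mul_self_nonneg P)]
        · have hAC : 2*q0*q0*(T*T) ≤ 2*q0*q0*(s0*A) := by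
            nlinarith only [hCS, mul_nonneg hq0nn hq0nn]
          nlinarith only [hpos, hAC, sq_nonneg (q0*T - 4*s0*P)]
      -- remaining term estimates
      have h1 : -(P*P) ≤ (q0*q0) * ((3*(U*U)-1) * (P*P)) := by
        nlinarith only [mul_nonneg (mul_nonneg (mul_self_nonneg P) (mul_self_nonneg q0))
          (mul_self_nonneg U),
          mul_nonneg (mul_self_nonneg P) (by linarith only [hq0sq] : (0:ℝ) ≤ 1 - q0*q0)]
      have h2 : -1 ≤ U * (U*U*U - U) := by
        nlinarith only [sq_nonneg (U*U - 1), sq_nonneg U]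
      have h3 : 4 * (n:ℝ) * q0 * (P*P) ≤ 4 * (n:ℝ) * (P*P) := by
        nlinarith only [mul_nonneg (mul_nonneg (by linarith only [hq0le] : (0:ℝ) ≤ 1 - q0) hn)
          (mul_self_nonneg P)]
      have h5 : M * (2 * (P*P)) ≤ M * (2 * B) := by nlinarith only [hBP, hMpos.le]
      have h6 : M * (-2 : ℝ) ≤ M * (U*(U*U*U-U) + U*(U*U*U-U)) := by
        nlinarith only [h2, hMpos.le]
      have h4 : 8 * s0 * (P*P) - 32 * s0 * (P*P) ≥ -24 * (P*P) := by
        nlinarith only [mul_nonneg (by linarith only [hs0le] : (0:ℝ) ≤ 1 - s0)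
          (mul_self_nonneg P), hs0nn, mul_self_nonneg P]
      have hMP : M * (P*P) = 4*(n:ℝ)*(P*P) + 26*(P*P) := by rw [hM]; ring
      -- conclude P² ≤ 2
      have hMP2 : M * (P*P) ≤ 2 * M := by
        linarith only [hLap0, hbig.ge, hbig.le, hcross, h1, h3, h4, h5, h6, hMP]
      have hP2 : P * P ≤ 2 := by nlinarith only [hMP2, hMpos]
      rw [hwpe]
      have t1 : (q0*q0) * (P*P) ≤ P*P := by nlinarith only [hq0sq, mul_self_nonneg P, hq0nn]
      have t2 : M * (U*U) ≤ M := by nlinarith only [hUbd, hMpos.le, mul_self_nonneg U]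
      linarith only [t1, t2, hP2]
    · -- boundary case
      have hd1 : dist p a = 1 := le_antisymm (Metric.mem_closedBall.1 hpK) hbdy
      have hEta0 : acEta a p = 0 := by
        have : acS a p = 1 := by rw [acS_dist, hd1]; norm_num
        show acQ a p * acQ a p = 0
        show (1 - acS a p) * (1 - acS a p) = 0
        rw [this]; ring
      have : w p = M * (u p * u p) := by rw [hwdef]; show acEta a p * _ + _ = _; rw [hEta0]; ring
      rw [this]
      nlinarith only [hUbd, hMpos.le, mul_self_nonneg (u p)]
  -- transfer the bound from p to the center a
  have hwa : w a ≤ w p := hpmax (Metric.mem_closedBall_self zero_le_one)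
  have hEta1 : acEta a a = 1 := by
    have : acS a a = 0 := by rw [acS_dist]; simp
    show (1 - acS a a) * (1 - acS a a) = 1
    rw [this]; ring
  have hwa2 : φ a * φ a ≤ w a := by
    rw [hwdef]
    show _ ≤ acEta a a * (φ a * φ a) + M * (u a * u a)
    rw [hEta1]
    nlinarith only [mul_self_nonneg (u a), hMpos.le]
  calc acPd u a j * acPd u a j = φ a * φ a := rfl
    _ ≤ w a := hwa2
    _ ≤ w p := hwa
    _ ≤ 2 + M := hwp

end AllenCahnMain


/-- uniform gradient bound for entire bounded solutions of Allen–Cahn. -/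
theorem statement_9 {n : ℕ} (u : EuclideanSpace ℝ (Fin n) → ℝ) (hu : ContDiff ℝ (⊤ : ℕ∞) u)
    (heq : ∀ x, lap u x = (u x) ^ 3 - u x)
    (hbd : ∀ x, |u x| < 1) :
    ∃ C > (0 : ℝ), ∀ x, ‖gradient u x‖ ≤ C := by
  set K : ℝ := 2 + (4 * (n : ℝ) + 26) with hK
  have hKnn : 0 ≤ (n : ℝ) * K := by positivity
  have heq' : ∀ x, acLap u x = (u x) ^ 3 - u x := fun x => heq x
  refine ⟨Real.sqrt ((n : ℝ) * K) + 1, by positivity, fun x => ?_⟩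
  have hgc : ∀ j : Fin n, gradient u x j = acPd u x j := by
    intro j
    have h1 : (gradient u x) j
        = @inner ℝ _ _ (gradient u x) (EuclideanSpace.single j (1:ℝ)) := by
      rw [EuclideanSpace.inner_single_right]
      simp
    have h2 : @inner ℝ _ _ (gradient u x) (EuclideanSpace.single j (1:ℝ))
        = fderiv ℝ u x (EuclideanSpace.single j 1) :=
      InnerProductSpace.toDual_symm_apply
    rw [h1, h2]
    rfl
  have hnorm : ‖gradient u x‖ ^ 2 = ∑ j, (gradient u x j) ^ 2 := by
    rw [EuclideanSpace.norm_eq, Real.sq_sqrt (Finset.sum_nonneg fun j _ => sq_nonneg _)]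
    exact Finset.sum_congr rfl fun j _ => by rw [Real.norm_eq_abs, sq_abs]
  have hsum : ‖gradient u x‖ ^ 2 ≤ (n : ℝ) * K := by
    rw [hnorm]
    calc ∑ j, (gradient u x j) ^ 2 = ∑ j : Fin n, acPd u x j * acPd u x j := by
          refine Finset.sum_congr rfl fun j _ => ?_
          rw [hgc j]; ring
      _ ≤ ∑ _j : Fin n, K := Finset.sum_le_sum fun j _ => acKey u hu heq' hbd x j
      _ = (n : ℝ) * K := by
          rw [Finset.sum_const, Finset.card_univ, Fintype.card_fin, nsmul_eq_mul]
  have h3 : ‖gradient u x‖ ≤ Real.sqrt ((n : ℝ) * K) := by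
    have := Real.sqrt_le_sqrt hsum
    rwa [Real.sqrt_sq (norm_nonneg _)] at this
  have h4 : (0:ℝ) ≤ Real.sqrt ((n : ℝ) * K) := Real.sqrt_nonneg _
  linarith only [h3, h4]
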